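/- arXiv:math/0310214 — 6 statements merged into one kernel-verified Lean document; each statement's English description precedes it below -/
import Mathlib

section
/- Let G be a compact abelian topological group with a continuous length function l, and let (H_n)_{n∈ℕ} be a sequence of closed subgroups of G converging to G for the Hausdorff distance associated to the metric d_l. Let F be a finite set of continuous characters of G. Then there exists N ∈ ℕ such that for all n ≥ N, the restriction map to H_n is injective on F: for all χ, χ' ∈ F, if χ(h) = χ'(h) for every h ∈ H_n, then χ = χ'. -/
/-!
If `χ ≠ χ'`, pick `g₀` with `c = ‖χ g₀ - χ' g₀‖ > 0`. The set `K` of `g` with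
`c ≤ ‖χ g - χ' g‖` is compact and avoids `1`, so `l ≥ ε` on `K` for some `ε > 0`. Once `Hₙ` is
`ε`-dense, write `g₀ = x * y` with `x ∈ Hₙ` and `l y < ε`; if `χ` and `χ'` agreed on `Hₙ`, then
`‖χ y - χ' y‖ = ‖χ g₀ - χ' g₀‖ = c` because `|χ' x| = 1`, i.e. `y ∈ K`, which is impossible.
Finiteness of `F` makes the threshold uniform over pairs.
-/

open Filter

theorem length_nonneg {G : Type*} [Group G] {l : G → ℝ} (hone : l 1 = 0)
    (hinv : ∀ g, l g⁻¹ = l g) (hsub : ∀ g h, l (g * h) ≤ l g + l h) (g : G) : 0 ≤ l g := by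
  have := hsub g g⁻¹
  rw [mul_inv_cancel, hinv, hone] at this
  linarith

theorem MonoidHom.norm_sub_map_mul_of_map_eq {G 𝕜 : Type*} [Group G] [NormedDivisionRing 𝕜]
    (χ χ' : G →* 𝕜) {x : G} (hx : χ x = χ' x) (hx' : ‖χ' x‖ = 1) (g : G) :
    ‖χ (x * g) - χ' (x * g)‖ = ‖χ g - χ' g‖ := by
  rw [map_mul, map_mul, hx, ← mul_sub, norm_mul, hx', one_mul]

theorem eventually_not_eqOn_subgroup {G 𝕜 ι : Type*} [Group G] [TopologicalSpace G]
    [CompactSpace G] [NormedDivisionRing 𝕜] {l : G → ℝ} (hl : Continuous l)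
    (hpos : ∀ g ≠ 1, 0 < l g) {L : Filter ι} {H : ι → Subgroup G}
    (hH : ∀ ε > 0, ∀ᶠ n in L, ∀ g : G, ∃ x ∈ H n, l (x⁻¹ * g) < ε)
    {χ χ' : G →* 𝕜} (hχ : Continuous χ) (hχ' : Continuous χ') (hmod : ∀ g, ‖χ' g‖ = 1)
    (hne : χ ≠ χ') : ∀ᶠ n in L, ¬ ∀ h ∈ H n, χ h = χ' h := by
  obtain ⟨g₀, hg₀⟩ := DFunLike.ne_iff.mp hne
  set c := ‖χ g₀ - χ' g₀‖
  have hc : 0 < c := norm_pos_iff.mpr (sub_ne_zero.mpr hg₀)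
  set K := {g : G | c ≤ ‖χ g - χ' g‖}
  have hK : IsClosed K := isClosed_le continuous_const (hχ.sub hχ').norm
  have hKpos : ∀ g ∈ K, 0 < l g := by
    refine fun g hg => hpos g ?_
    rintro rfl
    simp only [K, Set.mem_ofPred_eq, map_one, sub_self, norm_zero] at hg
    linarith
  obtain ⟨ε, hε, hεK⟩ := hK.isCompact.exists_forall_le' hl.continuousOn hKpos
  filter_upwards [hH ε hε] with n hn hagree
  obtain ⟨x, hx, hlt⟩ := hn g₀
  have hmem : c ≤ ‖χ (x⁻¹ * g₀) - χ' (x⁻¹ * g₀)‖ := by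
    have := χ.norm_sub_map_mul_of_map_eq χ' (hagree x hx) (hmod x) (x⁻¹ * g₀)
    rw [mul_inv_cancel_left] at this
    exact this.le
  exact (hεK _ hmem).not_gt hlt

theorem stmt_4_general {G : Type*} [CommGroup G] [TopologicalSpace G]
    [CompactSpace G] (l : G → ℝ) (hcont : Continuous l)
    (hzero : ∀ g : G, l g = 0 ↔ g = 1)
    (hinv : ∀ g : G, l g⁻¹ = l g)
    (hsub : ∀ g h : G, l (g * h) ≤ l g + l h)
    (H : ℕ → Subgroup G)
    (hHconv : ∀ ε > (0 : ℝ), ∃ N : ℕ, ∀ n ≥ N, ∀ g : G, ∃ x ∈ H n, l (x⁻¹ * g) < ε)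
    (F : Set (G →* ℂ)) (hFfin : F.Finite)
    (hFcont : ∀ χ ∈ F, Continuous χ)
    (hFmod : ∀ χ ∈ F, ∀ g : G, ‖χ g‖ = 1) :
    ∃ N : ℕ, ∀ n ≥ N, ∀ χ ∈ F, ∀ χ' ∈ F, (∀ h ∈ H n, χ h = χ' h) → χ = χ' := by
  have hpos : ∀ g ≠ 1, 0 < l g := fun g hg =>
    (length_nonneg ((hzero 1).mpr rfl) hinv hsub g).lt_of_ne' (mt (hzero g).mp hg)
  have hH : ∀ ε > (0 : ℝ), ∀ᶠ n in atTop, ∀ g : G, ∃ x ∈ H n, l (x⁻¹ * g) < ε :=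
    fun ε hε => eventually_atTop.mpr (hHconv ε hε)
  refine eventually_atTop.mp ?_
  rw [eventually_all_finite hFfin]
  intro χ hχ
  rw [eventually_all_finite hFfin]
  intro χ' hχ'
  by_cases hne : χ = χ'
  · exact Eventually.of_forall fun _ _ => hne
  · filter_upwards [eventually_not_eqOn_subgroup hcont hpos hH (hFcont χ hχ) (hFcont χ' hχ')
      (hFmod χ' hχ') hne] with n hn hagree
    exact absurd hagree hn

/-- If closed subgroups `Hₙ` of a compact abelian group `G` converge to `G`
for the Hausdorff distance of a continuous length function `l`, and `F` is a finite set of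
continuous characters of `G`, then for `n` large enough the restriction map to `Hₙ` is
injective on `F`. -/
theorem stmt_4 {G : Type*} [CommGroup G] [TopologicalSpace G] [IsTopologicalGroup G]
    [CompactSpace G] (l : G → ℝ) (hcont : Continuous l)
    (hzero : ∀ g : G, l g = 0 ↔ g = 1)
    (hinv : ∀ g : G, l g⁻¹ = l g)
    (hsub : ∀ g h : G, l (g * h) ≤ l g + l h)
    (H : ℕ → Subgroup G) (hHclosed : ∀ n, IsClosed ((H n : Set G)))
    (hHconv : ∀ ε > (0 : ℝ), ∃ N : ℕ, ∀ n ≥ N, ∀ g : G, ∃ x ∈ H n, l (x⁻¹ * g) < ε)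
    (F : Set (G →* ℂ)) (hFfin : F.Finite)
    (hFcont : ∀ χ ∈ F, Continuous χ)
    (hFmod : ∀ χ ∈ F, ∀ g : G, ‖χ g‖ = 1) :
    ∃ N : ℕ, ∀ n ≥ N, ∀ χ ∈ F, ∀ χ' ∈ F, (∀ h ∈ H n, χ h = χ' h) → χ = χ' :=
  stmt_4_general l hcont hzero hinv hsub H hHconv F hFfin hFcont hFmod
end

section
/- Let G be a compact abelian topological group with a continuous length function l, and let (H_n)_{n∈ℕ} be a sequence of closed subgroups of G converging to G for the Hausdorff distance associated to the metric d_l. Let χ be a continuous character of G and suppose there exists a strictly increasing function f : ℕ → ℕ such that χ(h) = 1 for every n ∈ ℕ and every h ∈ H_{f(n)}. Then χ is the trivial character, i.e., χ(g) = 1 for all g ∈ G. -/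
/-!
A compactness argument shows that every neighbourhood of `1` contains a sublevel set
`{l < δ}`, so the subgroups `Hₙ` are eventually dense up to any neighbourhood `U` of `1`:
every `g` lies in `x U` for some `x ∈ Hₙ`. If `χ g ≠ 1`, take `U = {y | χ y ≠ χ g}` and
`x ∈ H (f N)`; then `χ (x⁻¹ g) = χ g` because `χ` is trivial on `H (f N)`, contradicting
`x⁻¹ g ∈ U`.
-/

open Topology

theorem exists_pos_forall_lt_imp_mem {X : Type*} [TopologicalSpace X] [CompactSpace X]
    {l : X → ℝ} (hl : Continuous l) {a : X} (hpos : ∀ x ≠ a, 0 < l x) {U : Set X}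
    (hU : U ∈ 𝓝 a) : ∃ δ > 0, ∀ x, l x < δ → x ∈ U := by
  have ha : a ∈ interior U := mem_interior_iff_mem_nhds.2 hU
  obtain ⟨δ, hδ, hle⟩ := isOpen_interior.isClosed_compl.isCompact.exists_forall_le'
    hl.continuousOn fun x hx => hpos x fun hxa => hx (hxa ▸ ha)
  exact ⟨δ, hδ, fun x hx => interior_subset (by_contra fun h => (hle x h).not_gt hx)⟩

theorem length_pos_of_ne_one {G : Type*} [Group G] {l : G → ℝ}
    (hzero : ∀ g : G, l g = 0 ↔ g = 1) (hinv : ∀ g : G, l g⁻¹ = l g)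
    (hsub : ∀ g h : G, l (g * h) ≤ l g + l h) {g : G} (hg : g ≠ 1) : 0 < l g := by
  have hnonneg : 0 ≤ l g := by
    have := hsub g g⁻¹
    rw [mul_inv_cancel, (hzero 1).2 rfl, hinv] at this
    linarith
  exact hnonneg.lt_of_ne fun h => hg ((hzero g).1 h.symm)

theorem exists_forall_exists_inv_mul_mem {G : Type*} [Group G] [TopologicalSpace G]
    [CompactSpace G] {l : G → ℝ} (hcont : Continuous l)
    (hzero : ∀ g : G, l g = 0 ↔ g = 1) (hinv : ∀ g : G, l g⁻¹ = l g)
    (hsub : ∀ g h : G, l (g * h) ≤ l g + l h) {H : ℕ → Subgroup G}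
    (hHconv : ∀ ε > (0 : ℝ), ∃ N : ℕ, ∀ n ≥ N, ∀ g : G, ∃ x ∈ H n, l (x⁻¹ * g) < ε)
    {U : Set G} (hU : U ∈ 𝓝 1) : ∃ N : ℕ, ∀ n ≥ N, ∀ g : G, ∃ x ∈ H n, x⁻¹ * g ∈ U := by
  obtain ⟨δ, hδ, hδU⟩ := exists_pos_forall_lt_imp_mem hcont
    (fun _ hg => length_pos_of_ne_one hzero hinv hsub hg) hU
  obtain ⟨N, hN⟩ := hHconv δ hδ
  refine ⟨N, fun n hn g => ?_⟩
  obtain ⟨x, hx, hlx⟩ := hN n hn g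
  exact ⟨x, hx, hδU _ hlx⟩

theorem stmt_5_general {G : Type*} [CommGroup G] [TopologicalSpace G]
    [CompactSpace G] (l : G → ℝ) (hcont : Continuous l)
    (hzero : ∀ g : G, l g = 0 ↔ g = 1)
    (hinv : ∀ g : G, l g⁻¹ = l g)
    (hsub : ∀ g h : G, l (g * h) ≤ l g + l h)
    (H : ℕ → Subgroup G)
    (hHconv : ∀ ε > (0 : ℝ), ∃ N : ℕ, ∀ n ≥ N, ∀ g : G, ∃ x ∈ H n, l (x⁻¹ * g) < ε)
    (χ : G →* ℂ) (hχcont : Continuous χ)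
    (f : ℕ → ℕ) (hf : StrictMono f)
    (hχ1 : ∀ n : ℕ, ∀ h ∈ H (f n), χ h = 1) :
    ∀ g : G, χ g = 1 := by
  intro g
  by_contra hg
  have hU : {y : G | χ y ≠ χ g} ∈ 𝓝 1 :=
    (isOpen_ne_fun hχcont continuous_const).mem_nhds (by simpa [eq_comm] using hg)
  obtain ⟨N, hN⟩ := exists_forall_exists_inv_mul_mem hcont hzero hinv hsub hHconv hU
  obtain ⟨x, hx, hxg⟩ := hN (f N) hf.le_apply g
  exact hxg (by rw [map_mul, hχ1 N x⁻¹ (inv_mem hx), one_mul])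

/-- If closed subgroups `Hₙ` of a compact abelian group `G` converge to `G`
for the Hausdorff distance of a continuous length function `l`, and a continuous character
`χ` of `G` is identically `1` on the subgroups `H (f n)` along a strictly increasing
sequence `f`, then `χ` is the trivial character. -/
theorem stmt_5 {G : Type*} [CommGroup G] [TopologicalSpace G] [IsTopologicalGroup G]
    [CompactSpace G] (l : G → ℝ) (hcont : Continuous l)
    (hzero : ∀ g : G, l g = 0 ↔ g = 1)
    (hinv : ∀ g : G, l g⁻¹ = l g)
    (hsub : ∀ g h : G, l (g * h) ≤ l g + l h)
    (H : ℕ → Subgroup G) (hHclosed : ∀ n, IsClosed ((H n : Set G)))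
    (hHconv : ∀ ε > (0 : ℝ), ∃ N : ℕ, ∀ n ≥ N, ∀ g : G, ∃ x ∈ H n, l (x⁻¹ * g) < ε)
    (χ : G →* ℂ) (hχcont : Continuous χ)
    (hχmod : ∀ g : G, ‖χ g‖ = 1)
    (f : ℕ → ℕ) (hf : StrictMono f)
    (hχ1 : ∀ n : ℕ, ∀ h ∈ H (f n), χ h = 1) :
    ∀ g : G, χ g = 1 :=
  stmt_5_general l hcont hzero hinv hsub H hHconv χ hχcont f hf hχ1
end

section
/- Let G be a compact topological group, let H be a closed normal subgroup of G, and let K = G/H be the quotient topological group with quotient map g ↦ [g]. Let (l_n)_{n∈ℕ} be a sequence of continuous length functions on G converging uniformly on G to a function l̃ such that l̃(g) = 0 for every g ∈ H and l̃(g) > 0 for every g ∉ H. Then there exists a continuous length function l_∞ on K such that for every g ∈ G, l_n(g) → l_∞([g]) as n → ∞. -/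
/-!
The pointwise limit of length functions is still subadditive and symmetric, and a uniform limit
of continuous functions is continuous. A subadditive function vanishing on `H` is constant on the
cosets of `H`, so the limit `l̃` descends to `G ⧸ H`, where it vanishes exactly at the identity.
-/

open Filter Topology

section Limit

variable {α ι : Type*} {p : Filter ι} [p.NeBot] {f : ι → α → ℝ} {F : α → ℝ}

theorem map_mul_le_add_of_tendsto [Mul α] (hf : ∀ x, Tendsto (f · x) p (𝓝 (F x)))
    (hsub : ∀ i x y, f i (x * y) ≤ f i x + f i y) (x y : α) : F (x * y) ≤ F x + F y :=
  le_of_tendsto_of_tendsto' (hf (x * y)) ((hf x).add (hf y)) (hsub · x y)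

theorem map_inv_eq_of_tendsto [Inv α] (hf : ∀ x, Tendsto (f · x) p (𝓝 (F x)))
    (hinv : ∀ i x, f i x⁻¹ = f i x) (x : α) : F x⁻¹ = F x :=
  tendsto_nhds_unique (by simpa only [hinv] using hf x⁻¹) (hf x)

end Limit

namespace Subgroup

variable {G : Type*} [Group G] {H : Subgroup G} {f : G → ℝ}

theorem le_of_inv_mul_mem (hsub : ∀ x y, f (x * y) ≤ f x + f y) (hH : ∀ g ∈ H, f g = 0)
    {a b : G} (h : a⁻¹ * b ∈ H) : f b ≤ f a := by
  simpa only [mul_inv_cancel_left, hH _ h, add_zero] using hsub a (a⁻¹ * b)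

theorem eq_of_inv_mul_mem (hsub : ∀ x y, f (x * y) ≤ f x + f y) (hH : ∀ g ∈ H, f g = 0)
    {a b : G} (h : a⁻¹ * b ∈ H) : f a = f b :=
  le_antisymm (le_of_inv_mul_mem hsub hH (by simpa only [mul_inv_rev, inv_inv] using H.inv_mem h))
    (le_of_inv_mul_mem hsub hH h)

end Subgroup

namespace QuotientGroup

theorem exists_length_of_ker {G : Type*} [Group G] [TopologicalSpace G] (H : Subgroup G)
    [H.Normal] {f : G → ℝ} (hf : Continuous f) (hker : ∀ g, f g = 0 ↔ g ∈ H)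
    (hinv : ∀ g, f g⁻¹ = f g) (hsub : ∀ g h, f (g * h) ≤ f g + f h) :
    ∃ F : G ⧸ H → ℝ, Continuous F ∧ (∀ x, F x = 0 ↔ x = 1) ∧ (∀ x, F x⁻¹ = F x) ∧
      (∀ x y, F (x * y) ≤ F x + F y) ∧ ∀ g : G, F g = f g := by
  let F : G ⧸ H → ℝ := fun x => Quotient.liftOn' x f fun _ _ hab =>
    Subgroup.eq_of_inv_mul_mem hsub (fun g => (hker g).2) (leftRel_apply.mp hab)
  refine ⟨F, hf.quotient_liftOn' _, fun x => ?_, fun x => ?_, fun x y => ?_, fun _ => rfl⟩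
  · induction x using induction_on with
    | H g => exact (hker g).trans (eq_one_iff g).symm
  · induction x using induction_on with
    | H g => exact hinv g
  · induction x using induction_on with
    | H g => induction y using induction_on with
      | H h => exact hsub g h

end QuotientGroup

theorem stmt_7_general {G : Type*} [Group G] [TopologicalSpace G]
    (H : Subgroup G) [H.Normal]
    (l : ℕ → G → ℝ) (hcont : ∀ n, Continuous (l n))
    (hinv : ∀ n, ∀ g : G, l n g⁻¹ = l n g)
    (hsub : ∀ n, ∀ g h : G, l n (g * h) ≤ l n g + l n h)
    (ltil : G → ℝ) (hunif : TendstoUniformly l ltil Filter.atTop)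
    (hzH : ∀ g ∈ H, ltil g = 0) (hposH : ∀ g ∉ H, 0 < ltil g) :
    ∃ linf : G ⧸ H → ℝ, Continuous linf ∧
      (∀ x : G ⧸ H, linf x = 0 ↔ x = 1) ∧
      (∀ x : G ⧸ H, linf x⁻¹ = linf x) ∧
      (∀ x y : G ⧸ H, linf (x * y) ≤ linf x + linf y) ∧
      ∀ g : G, Filter.Tendsto (fun n => l n g) Filter.atTop
        (nhds (linf (QuotientGroup.mk g))) := by
  have htend (g : G) : Tendsto (l · g) atTop (𝓝 (ltil g)) := hunif.tendsto_at g
  have hker (g : G) : ltil g = 0 ↔ g ∈ H :=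
    ⟨fun h0 => not_not.mp fun hg => (hposH g hg).ne' h0, hzH g⟩
  obtain ⟨linf, hlinf_cont, hlinf_zero, hlinf_inv, hlinf_sub, hlinf_mk⟩ :=
    QuotientGroup.exists_length_of_ker H (hunif.continuous (.of_forall hcont)) hker
      (map_inv_eq_of_tendsto htend hinv) (map_mul_le_add_of_tendsto htend hsub)
  exact ⟨linf, hlinf_cont, hlinf_zero, hlinf_inv, hlinf_sub, fun g => hlinf_mk g ▸ htend g⟩

/-- Let `H` be a closed normal subgroup of a compact group `G` and
`K = G ⧸ H`. If continuous length functions `lₙ` on `G` converge uniformly to a function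
`l̃` vanishing exactly on `H`, then there is a continuous length function `l∞` on `K` with
`lₙ g → l∞ [g]` for every `g`. -/
theorem stmt_7 {G : Type*} [Group G] [TopologicalSpace G] [IsTopologicalGroup G]
    [CompactSpace G] (H : Subgroup G) [H.Normal] (hHclosed : IsClosed (H : Set G))
    (l : ℕ → G → ℝ) (hcont : ∀ n, Continuous (l n))
    (hzero : ∀ n, ∀ g : G, l n g = 0 ↔ g = 1)
    (hinv : ∀ n, ∀ g : G, l n g⁻¹ = l n g)
    (hsub : ∀ n, ∀ g h : G, l n (g * h) ≤ l n g + l n h)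
    (ltil : G → ℝ) (hunif : TendstoUniformly l ltil Filter.atTop)
    (hzH : ∀ g ∈ H, ltil g = 0) (hposH : ∀ g ∉ H, 0 < ltil g) :
    ∃ linf : G ⧸ H → ℝ, Continuous linf ∧
      (∀ x : G ⧸ H, linf x = 0 ↔ x = 1) ∧
      (∀ x : G ⧸ H, linf x⁻¹ = linf x) ∧
      (∀ x y : G ⧸ H, linf (x * y) ≤ linf x + linf y) ∧
      ∀ g : G, Filter.Tendsto (fun n => l n g) Filter.atTop
        (nhds (linf (QuotientGroup.mk g))) :=
  stmt_7_general H l hcont hinv hsub ltil hunif hzH hposH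
end

section
/- Let G be a compact topological group, H a closed normal subgroup, K = G/H the quotient topological group, and let (l_n)_{n∈ℕ} be a sequence of continuous length functions on G converging uniformly on G to a function l̃ with l̃(g) = 0 for g ∈ H and l̃(g) > 0 for g ∉ H. For each n define the quotient length function l_n^K on K by l_n^K([g]) = inf{ l_n(gh) : h ∈ H }, and let l_∞ be the function on K determined by l_∞([g]) = l̃(g). Then each l_n^K is continuous on K, and the sequence (l_n^K)_{n∈ℕ} converges uniformly on K to l_∞. -/
/-!
The bound `|lₙᴷ [g'] - lₙᴷ [g]| ≤ lₙ (g' g⁻¹)`, which follows from subadditivity and symmetry of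
`lₙ`, makes every `lₙᴷ` continuous. For the convergence, `l̃` is subadditive as a pointwise limit of
subadditive functions and vanishes on `H`, so `l̃ g ≤ l̃ (g h)` for `h ∈ H`; hence the infimum of
`lₙ` over the coset `g H` is within `sup |lₙ - l̃|` of `l̃ g`.
-/

open Filter Topology

theorem Function.Surjective.tendstoUniformly_of_comp {ι α β γ : Type*} [UniformSpace γ]
    {π : α → β} (hπ : Function.Surjective π) {F : ι → β → γ} {f : β → γ} {p : Filter ι}
    (h : TendstoUniformly (fun n => F n ∘ π) (f ∘ π) p) : TendstoUniformly F f p := by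
  intro u hu
  filter_upwards [h u hu] with n hn x
  obtain ⟨a, rfl⟩ := hπ x
  exact hn a

section CosetInf

variable {G : Type*} [Group G] {ℓ ℓ' : G → ℝ} {H : Subgroup G}

theorem nonneg_of_subadditive (h1 : ℓ 1 = 0) (hinv : ∀ g, ℓ g⁻¹ = ℓ g)
    (hmul : ∀ g h, ℓ (g * h) ≤ ℓ g + ℓ h) (g : G) : 0 ≤ ℓ g := by
  have := hmul g g⁻¹
  rw [mul_inv_cancel, h1, hinv] at this
  linarith

noncomputable def cosetInf (ℓ : G → ℝ) (H : Subgroup G) (g : G) : ℝ :=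
  sInf ((fun h => ℓ (g * h)) '' (H : Set G))

theorem le_cosetInf {c : ℝ} {g : G} (hc : ∀ h ∈ H, c ≤ ℓ (g * h)) : c ≤ cosetInf ℓ H g :=
  le_csInf ⟨ℓ (g * 1), 1, H.one_mem, rfl⟩ (by rintro _ ⟨h, hh, rfl⟩; exact hc h hh)

theorem cosetInf_le {c : ℝ} (hc : ∀ x, c ≤ ℓ x) {g h : G} (hh : h ∈ H) :
    cosetInf ℓ H g ≤ ℓ (g * h) :=
  csInf_le ⟨c, by rintro _ ⟨k, -, rfl⟩; exact hc _⟩ ⟨h, hh, rfl⟩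

theorem cosetInf_le_self {c : ℝ} (hc : ∀ x, c ≤ ℓ x) (g : G) : cosetInf ℓ H g ≤ ℓ g := by
  simpa using cosetInf_le (H := H) hc (g := g) H.one_mem

theorem cosetInf_le_add (hnn : ∀ x, 0 ≤ ℓ x) (hmul : ∀ g h, ℓ (g * h) ≤ ℓ g + ℓ h) (g g' : G) :
    cosetInf ℓ H g' ≤ ℓ (g' * g⁻¹) + cosetInf ℓ H g := by
  rw [← sub_le_iff_le_add']
  refine le_cosetInf fun h hh => sub_le_iff_le_add'.mpr ?_
  calc cosetInf ℓ H g' ≤ ℓ (g' * h) := cosetInf_le hnn hh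
    _ = ℓ (g' * g⁻¹ * (g * h)) := by group
    _ ≤ ℓ (g' * g⁻¹) + ℓ (g * h) := hmul _ _

theorem abs_cosetInf_sub_le (hnn : ∀ x, 0 ≤ ℓ x) (hinv : ∀ g, ℓ g⁻¹ = ℓ g)
    (hmul : ∀ g h, ℓ (g * h) ≤ ℓ g + ℓ h) (g g₀ : G) :
    |cosetInf ℓ H g - cosetInf ℓ H g₀| ≤ ℓ (g * g₀⁻¹) := by
  have hsymm : ℓ (g₀ * g⁻¹) = ℓ (g * g₀⁻¹) := by rw [← hinv, mul_inv_rev, inv_inv]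
  have := cosetInf_le_add (H := H) hnn hmul g g₀
  have := cosetInf_le_add (H := H) hnn hmul g₀ g
  rw [abs_le]
  constructor <;> linarith

theorem continuous_cosetInf [TopologicalSpace G] [IsTopologicalGroup G] (hcont : Continuous ℓ)
    (h1 : ℓ 1 = 0) (hinv : ∀ g, ℓ g⁻¹ = ℓ g) (hmul : ∀ g h, ℓ (g * h) ≤ ℓ g + ℓ h) :
    Continuous (cosetInf ℓ H) := by
  have hnn := nonneg_of_subadditive h1 hinv hmul
  refine continuous_iff_continuousAt.mpr fun g₀ => ?_
  have hlim : Tendsto (fun g => ℓ (g * g₀⁻¹)) (𝓝 g₀) (𝓝 0) :=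
    (hcont.comp (continuous_mul_const g₀⁻¹)).tendsto' g₀ 0 (by simp [h1])
  refine tendsto_iff_dist_tendsto_zero.mpr (squeeze_zero (fun _ => dist_nonneg) (fun g => ?_) hlim)
  exact abs_cosetInf_sub_le hnn hinv hmul g g₀

theorem abs_cosetInf_sub_le_of_forall_abs_sub_le (hnn : ∀ x, 0 ≤ ℓ x) {ε : ℝ}
    (hε : ∀ x, |ℓ x - ℓ' x| ≤ ε) {g : G} (hmono : ∀ h ∈ H, ℓ' g ≤ ℓ' (g * h)) :
    |cosetInf ℓ H g - ℓ' g| ≤ ε := by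
  have hlow : ℓ' g - ε ≤ cosetInf ℓ H g := le_cosetInf fun h hh => by
    linarith [(abs_le.mp (hε (g * h))).1, hmono h hh]
  have hup : cosetInf ℓ H g ≤ ℓ g := cosetInf_le_self hnn g
  rw [abs_le]
  constructor <;> linarith [abs_le.mp (hε g)]

theorem le_mul_of_subadditive_of_forall_mem_eq_zero (hmul : ∀ g h, ℓ (g * h) ≤ ℓ g + ℓ h)
    (hH : ∀ h ∈ H, ℓ h = 0) (g : G) : ∀ h ∈ H, ℓ g ≤ ℓ (g * h) := fun h hh => by
  have := hmul (g * h) h⁻¹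
  rw [mul_inv_cancel_right, hH _ (H.inv_mem hh)] at this
  linarith

theorem subadditive_of_tendsto {ι : Type*} {p : Filter ι} [p.NeBot] {F : ι → G → ℝ}
    (hF : ∀ g, Tendsto (F · g) p (𝓝 (ℓ g))) (hmul : ∀ n g h, F n (g * h) ≤ F n g + F n h)
    (g h : G) : ℓ (g * h) ≤ ℓ g + ℓ h :=
  le_of_tendsto_of_tendsto' (hF (g * h)) ((hF g).add (hF h)) (hmul · g h)

theorem tendstoUniformly_cosetInf {ι : Type*} {p : Filter ι} [p.NeBot] {F : ι → G → ℝ}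
    (hnn : ∀ n x, 0 ≤ F n x) (hmul : ∀ n g h, F n (g * h) ≤ F n g + F n h)
    (hF : TendstoUniformly F ℓ p) (hH : ∀ h ∈ H, ℓ h = 0) :
    TendstoUniformly (fun n => cosetInf (F n) H) ℓ p := by
  have hmono := le_mul_of_subadditive_of_forall_mem_eq_zero
    (subadditive_of_tendsto (fun g => hF.tendsto_at g) hmul) hH
  rw [Metric.tendstoUniformly_iff] at hF ⊢
  intro ε hε
  filter_upwards [hF (ε / 2) (half_pos hε)] with n hn g
  have hclose : ∀ x, |F n x - ℓ x| ≤ ε / 2 := fun x => by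
    rw [← Real.dist_eq, dist_comm]; exact (hn x).le
  rw [dist_comm, Real.dist_eq]
  linarith [abs_cosetInf_sub_le_of_forall_abs_sub_le (hnn n) hclose (hmono g)]

end CosetInf

theorem stmt_9_general {G : Type*} [Group G] [TopologicalSpace G] [IsTopologicalGroup G]
    (H : Subgroup G)
    (l : ℕ → G → ℝ) (hcont : ∀ n, Continuous (l n))
    (hzero : ∀ n, ∀ g : G, l n g = 0 ↔ g = 1)
    (hinv : ∀ n, ∀ g : G, l n g⁻¹ = l n g)
    (hsub : ∀ n, ∀ g h : G, l n (g * h) ≤ l n g + l n h)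
    (ltil : G → ℝ) (hunif : TendstoUniformly l ltil Filter.atTop)
    (hzH : ∀ g ∈ H, ltil g = 0)
    (lK : ℕ → G ⧸ H → ℝ)
    (hlK : ∀ n, ∀ g : G, lK n (QuotientGroup.mk g) =
      sInf ((fun h : G => l n (g * h)) '' (H : Set G)))
    (linf : G ⧸ H → ℝ)
    (hlinf : ∀ g : G, linf (QuotientGroup.mk g) = ltil g) :
    (∀ n, Continuous (lK n)) ∧ TendstoUniformly lK linf Filter.atTop := by
  have hone : ∀ n, l n 1 = 0 := fun n => (hzero n 1).mpr rfl
  have hlK' : ∀ n, lK n ∘ QuotientGroup.mk = cosetInf (l n) H := fun n => funext (hlK n)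
  refine ⟨fun n => ?_, QuotientGroup.mk_surjective.tendstoUniformly_of_comp ?_⟩
  · rw [(QuotientGroup.isQuotientMap_mk H).continuous_iff, hlK']
    exact continuous_cosetInf (hcont n) (hone n) (hinv n) (hsub n)
  · simp only [hlK', show linf ∘ QuotientGroup.mk = ltil from funext hlinf]
    exact tendstoUniformly_cosetInf (fun n => nonneg_of_subadditive (hone n) (hinv n) (hsub n))
      hsub hunif hzH

/-- With `H` a closed normal subgroup of the compact group `G`, `K = G ⧸ H`,
continuous length functions `lₙ` converging uniformly to `l̃` which vanishes exactly on `H`,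
the quotient length functions `lₙᴷ [g] = inf { lₙ (g h) : h ∈ H }` are continuous on `K` and
converge uniformly on `K` to `l∞`, where `l∞ [g] = l̃ g`. -/
theorem stmt_9 {G : Type*} [Group G] [TopologicalSpace G] [IsTopologicalGroup G]
    [CompactSpace G] (H : Subgroup G) [H.Normal] (hHclosed : IsClosed (H : Set G))
    (l : ℕ → G → ℝ) (hcont : ∀ n, Continuous (l n))
    (hzero : ∀ n, ∀ g : G, l n g = 0 ↔ g = 1)
    (hinv : ∀ n, ∀ g : G, l n g⁻¹ = l n g)
    (hsub : ∀ n, ∀ g h : G, l n (g * h) ≤ l n g + l n h)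
    (ltil : G → ℝ) (hunif : TendstoUniformly l ltil Filter.atTop)
    (hzH : ∀ g ∈ H, ltil g = 0) (hposH : ∀ g ∉ H, 0 < ltil g)
    (lK : ℕ → G ⧸ H → ℝ)
    (hlK : ∀ n, ∀ g : G, lK n (QuotientGroup.mk g) =
      sInf ((fun h : G => l n (g * h)) '' (H : Set G)))
    (linf : G ⧸ H → ℝ)
    (hlinf : ∀ g : G, linf (QuotientGroup.mk g) = ltil g) :
    (∀ n, Continuous (lK n)) ∧ TendstoUniformly lK linf Filter.atTop :=
  stmt_9_general H l hcont hzero hinv hsub ltil hunif hzH lK hlK linf hlinf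
end

section
/- Let A be a complex Banach space, G a compact topological group with identity e acting on A by linear isometries α_g with the action strongly continuous, H a closed normal subgroup of G, and l a continuous length function on G. Define the quotient length function l^K on K = G/H by l^K([g]) = inf{ l(gh) : h ∈ H }. Then for every a in the fixed-point set A^H = { b ∈ A : α_h(b) = b for all h ∈ H }: (i) the quantity ‖a − α_g(a)‖ depends only on the coset [g] of g in K; and (ii) the suprema (taken in [0, ∞]) satisfy sup{ ‖a − α_g(a)‖ / l(g) : g ∈ G, g ≠ e } = sup{ ‖a − α_g(a)‖ / l^K([g]) : [g] ∈ K, [g] ≠ [e] }. -/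
/-!
An `H`-fixed vector `a` has `α (g * h) a = α g a` for `h ∈ H`, so its displacement
`‖a - α g a‖` is a function on `G ⧸ H`. Since `H` is compact and `l` continuous, the infimum
`lᴷ [g] = inf_{h ∈ H} l (g h)` is attained at some `g h₀`, and `lᴷ [g] ≤ l g`. Hence every
quotient ratio equals the ratio at the representative `g h₀ ≠ 1`, while every ratio at `g ≠ 1`
is either `0` (when `g ∈ H`) or bounded by the quotient ratio at `[g]`.
-/

theorem apply_eq_of_mk_eq {G X : Type*} [Group G] {α : G → X → X}
    (hmul : ∀ g h : G, ∀ x : X, α (g * h) x = α g (α h x)) {H : Subgroup G} {x : X}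
    (hx : ∀ h ∈ H, α h x = x) {g g' : G} (hgg' : (g : G ⧸ H) = g') : α g x = α g' x := by
  calc α g x = α g (α (g⁻¹ * g') x) := by rw [hx _ (QuotientGroup.eq.mp hgg')]
    _ = α g' x := by rw [← hmul, mul_inv_cancel_left]

/-- The quotient length `lᴷ`, pulled back along `G → G ⧸ H`. -/
noncomputable def cosetInfLength {G : Type*} [Group G] (l : G → ℝ) (H : Subgroup G) (g : G) :
    ℝ :=
  sInf ((fun h : G => l (g * h)) '' (H : Set G))

theorem exists_cosetInfLength_eq_and_le {G : Type*} [Group G] [TopologicalSpace G]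
    [ContinuousMul G] {l : G → ℝ} (hl : Continuous l) {H : Subgroup G}
    (hH : IsCompact (H : Set G)) (g : G) :
    ∃ h ∈ H, cosetInfLength l H g = l (g * h) ∧ cosetInfLength l H g ≤ l g := by
  obtain ⟨h, hh, heq, hmin⟩ := hH.exists_sInf_image_eq_and_le ⟨1, H.one_mem⟩
    (hl.comp (continuous_const_mul g)).continuousOn
  exact ⟨h, hh, heq, heq.trans_le (by simpa using hmin 1 H.one_mem)⟩

theorem iSup_div_eq_iSup_div_quotient {G : Type*} [Group G] {H : Subgroup G} [H.Normal]
    {d : G → ENNReal} {l L : G → ℝ}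
    (hd : ∀ g g' : G, (g : G ⧸ H) = g' → d g = d g') (hd_one : d 1 = 0)
    (hL : ∀ g : G, ∃ h ∈ H, L g = l (g * h) ∧ L g ≤ l g) :
    (⨆ (g : G) (_ : g ≠ 1), d g / ENNReal.ofReal (l g)) =
      ⨆ (g : G) (_ : (g : G ⧸ H) ≠ 1), d g / ENNReal.ofReal (L g) := by
  apply le_antisymm
  · refine iSup₂_le fun g hg => ?_
    by_cases hgH : (g : G ⧸ H) = 1
    · simp [hd g 1 hgH, hd_one]
    · obtain ⟨-, -, -, hle⟩ := hL g
      exact le_iSup₂_of_le g hgH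
        (ENNReal.div_le_div_left (ENNReal.ofReal_le_ofReal hle) _)
  · refine iSup₂_le fun g hg => ?_
    obtain ⟨h, hh, heq, -⟩ := hL g
    have hmk : ((g * h : G) : G ⧸ H) = g := QuotientGroup.mk_mul_of_mem g hh
    have hne : g * h ≠ 1 := by
      rintro hgh
      exact hg (by rw [← hmk, hgh, QuotientGroup.mk_one])
    rw [heq, hd g (g * h) hmk.symm]
    exact le_iSup₂_of_le (g * h) hne le_rfl

theorem stmt_13_general {A : Type*} [NormedAddCommGroup A]
    {G : Type*} [Group G] [TopologicalSpace G] [IsTopologicalGroup G] [CompactSpace G]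
    (α : G → A → A)
    (hhom : ∀ g h : G, ∀ a : A, α (g * h) a = α g (α h a))
    (H : Subgroup G) [H.Normal] (hHclosed : IsClosed (H : Set G))
    (l : G → ℝ) (hlcont : Continuous l)
    (lK : G ⧸ H → ℝ)
    (hlK : ∀ g : G, lK (QuotientGroup.mk g) = sInf ((fun h : G => l (g * h)) '' (H : Set G))) :
    ∀ a : A, (∀ h ∈ H, α h a = a) →
      (∀ g g' : G, (QuotientGroup.mk g : G ⧸ H) = QuotientGroup.mk g' →
        ‖a - α g a‖ = ‖a - α g' a‖) ∧
      (⨆ (g : G) (_ : g ≠ 1), ENNReal.ofReal ‖a - α g a‖ / ENNReal.ofReal (l g)) =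
        (⨆ (g : G) (_ : (QuotientGroup.mk g : G ⧸ H) ≠ 1),
          ENNReal.ofReal ‖a - α g a‖ / ENNReal.ofReal (lK (QuotientGroup.mk g))) := by
  intro a ha
  have hcoset : ∀ g g' : G, (g : G ⧸ H) = g' → ‖a - α g a‖ = ‖a - α g' a‖ :=
    fun g g' hgg' => by rw [apply_eq_of_mk_eq hhom ha hgg']
  refine ⟨hcoset, iSup_div_eq_iSup_div_quotient
    (fun g g' hgg' => by rw [hcoset g g' hgg']) (by simp [ha 1 H.one_mem]) fun g => ?_⟩
  rw [hlK]
  exact exists_cosetInfLength_eq_and_le hlcont hHclosed.isCompact g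

/-- With `G` a compact group acting strongly continuously by linear
isometries on a complex Banach space `A`, `H` a closed normal subgroup, `l` a continuous
length function on `G`, and `lᴷ [g] = inf { l (g h) : h ∈ H }` the quotient length function
on `K = G ⧸ H`: for every `a` in the fixed-point set `A^H`, the quantity `‖a − α g a‖`
only depends on the coset of `g`, and the suprema (in `[0, ∞]`)
`sup_{g ≠ 1} ‖a − α g a‖ / l g` and `sup_{[g] ≠ [1]} ‖a − α g a‖ / lᴷ [g]` coincide. -/
theorem stmt_13 {A : Type*} [NormedAddCommGroup A] [NormedSpace ℂ A] [CompleteSpace A]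
    {G : Type*} [Group G] [TopologicalSpace G] [IsTopologicalGroup G] [CompactSpace G]
    (α : G → A → A)
    (hadd : ∀ g : G, ∀ a b : A, α g (a + b) = α g a + α g b)
    (hsmul : ∀ g : G, ∀ (c : ℂ) (a : A), α g (c • a) = c • α g a)
    (hiso : ∀ g : G, ∀ a : A, ‖α g a‖ = ‖a‖)
    (hone : ∀ a : A, α 1 a = a)
    (hhom : ∀ g h : G, ∀ a : A, α (g * h) a = α g (α h a))
    (hstrong : ∀ a : A, Continuous fun g : G => α g a)
    (H : Subgroup G) [H.Normal] (hHclosed : IsClosed (H : Set G))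
    (l : G → ℝ) (hlcont : Continuous l)
    (hzero : ∀ g : G, l g = 0 ↔ g = 1)
    (hinv : ∀ g : G, l g⁻¹ = l g)
    (hsub : ∀ g h : G, l (g * h) ≤ l g + l h)
    (lK : G ⧸ H → ℝ)
    (hlK : ∀ g : G, lK (QuotientGroup.mk g) = sInf ((fun h : G => l (g * h)) '' (H : Set G))) :
    ∀ a : A, (∀ h ∈ H, α h a = a) →
      (∀ g g' : G, (QuotientGroup.mk g : G ⧸ H) = QuotientGroup.mk g' →
        ‖a - α g a‖ = ‖a - α g' a‖) ∧
      (⨆ (g : G) (_ : g ≠ 1), ENNReal.ofReal ‖a - α g a‖ / ENNReal.ofReal (l g)) =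
        (⨆ (g : G) (_ : (QuotientGroup.mk g : G ⧸ H) ≠ 1),
          ENNReal.ofReal ‖a - α g a‖ / ENNReal.ofReal (lK (QuotientGroup.mk g))) :=
  stmt_13_general α hhom H hHclosed l hlcont lK hlK
end

section
/- Let G₁ and G₂ be compact topological groups and let l be a continuous length function on the product group G₁ × G₂. For each n ∈ ℕ define l_n(ω₁, ω₂) = (1/(n+1)) · l(ω₁, ω₂) + (1 − 1/(n+1)) · l(ω₁, 1). Then: (i) each l_n is a continuous length function on G₁ × G₂; (ii) the sequence (l_n) converges uniformly on G₁ × G₂ to the function l̃(ω₁, ω₂) = l(ω₁, 1), which vanishes exactly on the closed normal subgroup H = {1} × G₂; and (iii) writing l_n^H(ω₁) = inf{ l_n(ω₁, ω₂) : ω₂ ∈ G₂ }, one has sup{ | l(ω₁, 1) / l_n^H(ω₁) − 1 | : ω₁ ∈ G₁, ω₁ ≠ 1 } → 0 as n → ∞. -/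
/-!
Write `π ω = (ω₁, 1)`, an endomorphism of `G₁ × G₂` with kernel `H`, and `s = 1/(n+1)`.
Then `lₙ = s • l + (1 - s) • (l ∘ π)`: the first summand vanishes only at `1` and the second
is the pullback of a length function along a homomorphism, so `lₙ` is again a length function.
Its distance to `l ∘ π` is `s • |l - l ∘ π|`, uniformly small because `l` is bounded on the
compact group. Finally `inf_{ω₂} lₙ (ω₁, ω₂)` lies between `(1 - s) l (ω₁, 1)` (drop the first
summand) and `l (ω₁, 1)` (take `ω₂ = 1`), so the ratio in (iii) is within `s / (1 - s) = 1/n`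
of `1`.
-/

open Filter Topology

structure IsLengthFunction {G : Type*} [Group G] (l : G → ℝ) : Prop where
  eq_zero_iff : ∀ g, l g = 0 ↔ g = 1
  map_inv : ∀ g, l g⁻¹ = l g
  map_mul_le : ∀ g h, l (g * h) ≤ l g + l h

namespace IsLengthFunction

variable {G : Type*} [Group G] {l : G → ℝ}

theorem map_one (hl : IsLengthFunction l) : l 1 = 0 :=
  (hl.eq_zero_iff 1).2 rfl

theorem nonneg (hl : IsLengthFunction l) (g : G) : 0 ≤ l g := by
  have h := hl.map_mul_le g g⁻¹
  rw [mul_inv_cancel, hl.map_one, hl.map_inv] at h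
  linarith

theorem pos (hl : IsLengthFunction l) {g : G} (hg : g ≠ 1) : 0 < l g :=
  (hl.nonneg g).lt_of_ne' fun h => hg ((hl.eq_zero_iff g).1 h)

theorem mul_add_mul_comp (hl : IsLengthFunction l) (f : G →* G) {s t : ℝ} (hs : 0 < s)
    (ht : 0 ≤ t) : IsLengthFunction fun g => s * l g + t * l (f g) where
  eq_zero_iff g := by
    constructor
    · intro h
      have hfg := mul_nonneg ht (hl.nonneg (f g))
      have hg : s * l g = 0 := le_antisymm (by linarith) (mul_nonneg hs.le (hl.nonneg g))
      exact (hl.eq_zero_iff g).1 ((mul_eq_zero.1 hg).resolve_left hs.ne')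
    · rintro rfl
      simp [hl.map_one]
  map_inv g := by simp only [_root_.map_inv, hl.map_inv]
  map_mul_le g h := by
    have hgh := hl.map_mul_le g h
    have hfgh := hl.map_mul_le (f g) (f h)
    rw [map_mul]
    nlinarith

end IsLengthFunction

theorem tendstoUniformly_mul_add_one_sub_mul {α ι : Type*} {p : Filter ι} {s : ι → ℝ}
    (hs : Tendsto s p (𝓝 0)) {f g : α → ℝ} {C : ℝ} (hC : ∀ x, |f x - g x| ≤ C) :
    TendstoUniformly (fun i x => s i * f x + (1 - s i) * g x) g p := by
  rw [Metric.tendstoUniformly_iff]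
  intro ε hε
  have hsC : Tendsto (fun i => |s i| * C) p (𝓝 0) := by
    simpa using hs.abs.mul_const C
  filter_upwards [hsC.eventually (gt_mem_nhds hε)] with i hi x
  calc dist (g x) (s i * f x + (1 - s i) * g x) = |s i| * |f x - g x| := by
        rw [Real.dist_eq, abs_sub_comm, ← abs_mul]; congr 1; ring
    _ ≤ |s i| * C := mul_le_mul_of_nonneg_left (hC x) (abs_nonneg _)
    _ < ε := hi

theorem abs_div_sub_one_le {L I s : ℝ} (hL : 0 < L) (hs : s < 1) (hlow : (1 - s) * L ≤ I)
    (hup : I ≤ L) : |L / I - 1| ≤ s / (1 - s) := by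
  have hI : 0 < I := lt_of_lt_of_le (mul_pos (sub_pos.2 hs) hL) hlow
  rw [abs_of_nonneg (sub_nonneg.2 ((one_le_div hI).2 hup)), div_sub_one hI.ne',
    div_le_div_iff₀ hI (sub_pos.2 hs)]
  nlinarith

theorem abs_div_sInf_sub_one_le {β : Type*} {f : β → ℝ} (hf : ∀ b, 0 ≤ f b) {b₀ : β}
    (hb₀ : 0 < f b₀) {s : ℝ} (hs₀ : 0 ≤ s) (hs₁ : s < 1) :
    |f b₀ / sInf (Set.range fun b => s * f b + (1 - s) * f b₀) - 1| ≤ s / (1 - s) := by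
  have : Nonempty β := ⟨b₀⟩
  have hlow : ∀ b, (1 - s) * f b₀ ≤ s * f b + (1 - s) * f b₀ := fun b => by
    nlinarith [mul_nonneg hs₀ (hf b)]
  apply abs_div_sub_one_le hb₀ hs₁ (le_ciInf hlow)
  calc sInf (Set.range fun b => s * f b + (1 - s) * f b₀)
      ≤ s * f b₀ + (1 - s) * f b₀ := ciInf_le ⟨_, Set.forall_mem_range.2 hlow⟩ b₀
    _ = f b₀ := by ring

theorem stmt_14_general {G₁ G₂ : Type*}
    [Group G₁] [TopologicalSpace G₁] [CompactSpace G₁]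
    [Group G₂] [TopologicalSpace G₂] [CompactSpace G₂]
    (l : G₁ × G₂ → ℝ) (hlcont : Continuous l)
    (hzero : ∀ ω : G₁ × G₂, l ω = 0 ↔ ω = 1)
    (hinv : ∀ ω : G₁ × G₂, l ω⁻¹ = l ω)
    (hsub : ∀ ω ω' : G₁ × G₂, l (ω * ω') ≤ l ω + l ω')
    (ln : ℕ → G₁ × G₂ → ℝ)
    (hln : ∀ n : ℕ, ∀ ω : G₁ × G₂,
      ln n ω = (1 / (n + 1 : ℝ)) * l ω + (1 - 1 / (n + 1 : ℝ)) * l (ω.1, 1)) :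
    (∀ n : ℕ, Continuous (ln n) ∧ (∀ ω : G₁ × G₂, ln n ω = 0 ↔ ω = 1) ∧
      (∀ ω : G₁ × G₂, ln n ω⁻¹ = ln n ω) ∧
      (∀ ω ω' : G₁ × G₂, ln n (ω * ω') ≤ ln n ω + ln n ω')) ∧
    (TendstoUniformly ln (fun ω : G₁ × G₂ => l (ω.1, 1)) Filter.atTop ∧
      ∀ ω : G₁ × G₂, l (ω.1, 1) = 0 ↔ ω ∈ {p : G₁ × G₂ | p.1 = 1}) ∧
    (∀ ε > (0 : ℝ), ∃ N : ℕ, ∀ n ≥ N, ∀ ω₁ : G₁, ω₁ ≠ 1 →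
      |l (ω₁, 1) / sInf ((fun ω₂ : G₂ => ln n (ω₁, ω₂)) '' Set.univ) - 1| ≤ ε) := by
  have hl : IsLengthFunction l := ⟨hzero, hinv, hsub⟩
  obtain rfl : ln = fun (n : ℕ) ω => 1 / (n + 1 : ℝ) * l ω + (1 - 1 / (n + 1 : ℝ)) * l (ω.1, 1) :=
    funext fun n => funext (hln n)
  have hs : Tendsto (fun n : ℕ => 1 / (n + 1 : ℝ)) atTop (𝓝 0) :=
    tendsto_one_div_add_atTop_nhds_zero_nat
  have hs_le_one (n : ℕ) : 1 / (n + 1 : ℝ) ≤ 1 := div_le_one_of_le₀ (by simp) (by positivity)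
  refine ⟨fun n => ?_, ⟨?_, fun ω => ?_⟩, fun ε hε => ?_⟩
  · have hn := hl.mul_add_mul_comp ((MonoidHom.inl G₁ G₂).comp (MonoidHom.fst G₁ G₂))
      (s := 1 / (n + 1 : ℝ)) (by positivity) (sub_nonneg.2 (hs_le_one n))
    exact ⟨by fun_prop, hn.eq_zero_iff, hn.map_inv, hn.map_mul_le⟩
  · obtain ⟨C, hC⟩ := isCompact_univ.exists_bound_of_continuousOn
      (hlcont.sub (hlcont.comp (continuous_fst.prodMk continuous_const))).continuousOn
    exact tendstoUniformly_mul_add_one_sub_mul hs fun ω => hC ω trivial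
  · simp [hzero]
  · have hsmall : Tendsto (fun n : ℕ => 1 / (n + 1 : ℝ) / (1 - 1 / (n + 1 : ℝ))) atTop (𝓝 0) := by
      have h := hs.div (hs.const_sub 1) (by norm_num)
      rwa [sub_zero, zero_div] at h
    obtain ⟨N, hN⟩ := eventually_atTop.1 <|
      (hsmall.eventually (ge_mem_nhds hε)).and (eventually_gt_atTop 0)
    refine ⟨N, fun n hn ω₁ hω₁ => ?_⟩
    obtain ⟨hε', hn₁⟩ := hN n hn
    rw [Set.image_univ]
    have hs_lt_one : 1 / (n + 1 : ℝ) < 1 := by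
      rw [div_lt_one (by positivity)]
      simpa using hn₁
    exact (abs_div_sInf_sub_one_le (f := fun ω₂ => l (ω₁, ω₂)) (fun _ => hl.nonneg _)
      (hl.pos (by simpa using hω₁)) (by positivity) hs_lt_one).trans hε'

/-- For compact groups `G₁`, `G₂` and a continuous length function `l` on
`G₁ × G₂`, the functions `lₙ (ω₁, ω₂) = (1/(n+1)) l (ω₁, ω₂) + (1 − 1/(n+1)) l (ω₁, 1)`
are continuous length functions on `G₁ × G₂`, converge uniformly to
`l̃ (ω₁, ω₂) = l (ω₁, 1)` (which vanishes exactly on `H = {1} × G₂`), and the quotient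
length functions `lₙᴴ (ω₁) = inf_{ω₂} lₙ (ω₁, ω₂)` satisfy
`sup_{ω₁ ≠ 1} | l (ω₁, 1) / lₙᴴ (ω₁) − 1 | → 0`. -/
theorem stmt_14 {G₁ G₂ : Type*}
    [Group G₁] [TopologicalSpace G₁] [IsTopologicalGroup G₁] [CompactSpace G₁]
    [Group G₂] [TopologicalSpace G₂] [IsTopologicalGroup G₂] [CompactSpace G₂]
    (l : G₁ × G₂ → ℝ) (hlcont : Continuous l)
    (hzero : ∀ ω : G₁ × G₂, l ω = 0 ↔ ω = 1)
    (hinv : ∀ ω : G₁ × G₂, l ω⁻¹ = l ω)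
    (hsub : ∀ ω ω' : G₁ × G₂, l (ω * ω') ≤ l ω + l ω')
    (ln : ℕ → G₁ × G₂ → ℝ)
    (hln : ∀ n : ℕ, ∀ ω : G₁ × G₂,
      ln n ω = (1 / (n + 1 : ℝ)) * l ω + (1 - 1 / (n + 1 : ℝ)) * l (ω.1, 1)) :
    (∀ n : ℕ, Continuous (ln n) ∧ (∀ ω : G₁ × G₂, ln n ω = 0 ↔ ω = 1) ∧
      (∀ ω : G₁ × G₂, ln n ω⁻¹ = ln n ω) ∧
      (∀ ω ω' : G₁ × G₂, ln n (ω * ω') ≤ ln n ω + ln n ω')) ∧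
    (TendstoUniformly ln (fun ω : G₁ × G₂ => l (ω.1, 1)) Filter.atTop ∧
      ∀ ω : G₁ × G₂, l (ω.1, 1) = 0 ↔ ω ∈ {p : G₁ × G₂ | p.1 = 1}) ∧
    (∀ ε > (0 : ℝ), ∃ N : ℕ, ∀ n ≥ N, ∀ ω₁ : G₁, ω₁ ≠ 1 →
      |l (ω₁, 1) / sInf ((fun ω₂ : G₂ => ln n (ω₁, ω₂)) '' Set.univ) - 1| ≤ ε) :=
  stmt_14_general l hlcont hzero hinv hsub ln hln
end
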